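/- arXiv:0902.0320 — 4 statements merged into one kernel-verified Lean document; each statement's English description precedes it below -/
import Mathlib

section
/- The number of partitions of a 2k-element set into k unordered pairs is (2k-1)!! , and of these, ((2k-1)!!+1)/2 have even crossing number and ((2k-1)!!-1)/2 have odd crossing number with respect to any fixed cyclic order of the 2k elements; hence the signed sum Σ_ξ (-1)^{N(ξ)} over all pair partitions ξ equals 1. -/
/-! Induction on `k`. In canonical form the point `0` is paired with some point `m + 1`,
`m ∈ {0, …, 2k}`, and removing this chord leaves a pair partition of the remaining `2k` points;
this is a bijection `{0, …, 2k} × PP(k) ≃ PP(k + 1)`, whence `(2k + 1) · (2k - 1)‼` partitions.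
The removed chord crosses exactly the chords with one endpoint among the `m` points
`1, …, m`; as the other chords meet those points in pairs, this number is `≡ m (mod 2)`. So the
signed sum gets multiplied by `∑_{m=0}^{2k} (-1)^m = 1`. With `E + O = (2k - 1)‼` and `E - O = 1`
for the numbers `E`, `O` of even and odd partitions, the counts follow. -/

open Finset
open scoped Classical

/-- The element `2*i` of `Fin (2*k)`. -/
def dbl {k : ℕ} (i : Fin k) : Fin (2 * k) := ⟨2 * i.1, by have := i.isLt; omega⟩

/-- The element `2*i+1` of `Fin (2*k)`. -/
def dbl' {k : ℕ} (i : Fin k) : Fin (2 * k) := ⟨2 * i.1 + 1, by have := i.isLt; omega⟩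

/-- Pair partitions of the `2k`-element set `Fin (2*k)`, encoded by permutations in
canonical form: the pairs are `{σ(2i), σ(2i+1)}` with `σ(2i) < σ(2i+1)` and
`σ(0) < σ(2) < ⋯`. This set is in bijection with the pair partitions. -/
noncomputable def pairPartitions (k : ℕ) : Finset (Equiv.Perm (Fin (2 * k))) :=
  Finset.univ.filter (fun σ =>
    (∀ i : Fin k, σ (dbl i) < σ (dbl' i)) ∧
    ∀ i j : Fin k, i < j → σ (dbl i) < σ (dbl j))

/-- The crossing number `N(ξ)` of a pair partition with respect to the fixed cyclic
order of `Fin (2*k)` on the circle. -/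
noncomputable def crossNum {k : ℕ} (σ : Equiv.Perm (Fin (2 * k))) : ℕ :=
  Nat.card {p : Fin k × Fin k // p.1 < p.2 ∧
    Xor' (σ (dbl p.1) < σ (dbl p.2) ∧ σ (dbl p.2) < σ (dbl' p.1))
         (σ (dbl p.1) < σ (dbl' p.2) ∧ σ (dbl' p.2) < σ (dbl' p.1))}

open Equiv Equiv.Perm

lemma sum_neg_one_pow_eq_card_sub_card {α : Type*} (s : Finset α) (f : α → ℕ) :
    ∑ x ∈ s, (-1 : ℤ) ^ f x =
      #(s.filter (fun x => Even (f x))) - #(s.filter (fun x => ¬ Even (f x))) := by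
  rw [← Finset.sum_filter_add_sum_filter_not s (fun x => Even (f x)),
    Finset.sum_congr rfl fun x hx => (Finset.mem_filter.mp hx).2.neg_one_pow,
    Finset.sum_congr rfl fun x hx =>
      (Nat.not_even_iff_odd.mp (Finset.mem_filter.mp hx).2).neg_one_pow]
  simp [sub_eq_add_neg]

def liftFinSucc {n : ℕ} (e : Perm (Fin n)) : Perm (Fin (n + 1)) := decomposeFin.symm (0, e)

section liftFinSucc

variable {n : ℕ}

@[simp] lemma liftFinSucc_apply_zero (e : Perm (Fin n)) : liftFinSucc e 0 = 0 :=
  decomposeFin_symm_apply_zero 0 e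

@[simp] lemma liftFinSucc_apply_succ (e : Perm (Fin n)) (x : Fin n) :
    liftFinSucc e x.succ = (e x).succ := by
  simp [liftFinSucc, decomposeFin_symm_apply_succ]

lemma liftFinSucc_injective : Function.Injective (liftFinSucc (n := n)) := fun _ _ h =>
  congrArg Prod.snd (decomposeFin.symm.injective h)

lemma exists_liftFinSucc_eq_of_apply_zero {σ : Perm (Fin (n + 1))} (hσ : σ 0 = 0) :
    ∃ e, liftFinSucc e = σ := by
  refine ⟨(decomposeFin σ).2, ?_⟩
  have h0 : (decomposeFin σ).1 = 0 := by
    simpa [hσ, eq_comm] using decomposeFin_symm_apply_zero (decomposeFin σ).1 (decomposeFin σ).2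
  rw [liftFinSucc, ← h0, Prod.mk.eta, Equiv.symm_apply_apply]

end liftFinSucc

variable {k : ℕ}

lemma mem_pairPartitions {σ : Perm (Fin (2 * k))} :
    σ ∈ pairPartitions k ↔
      (∀ i, σ (dbl i) < σ (dbl' i)) ∧ ∀ i j, i < j → σ (dbl i) < σ (dbl j) := by
  simp [pairPartitions]

lemma exists_eq_dbl_or_eq_dbl' (x : Fin (2 * k)) : ∃ i, x = dbl i ∨ x = dbl' i :=
  ⟨⟨x / 2, by omega⟩, by simp only [dbl, dbl', Fin.ext_iff]; omega⟩

lemma sum_fin_two_mul {M : Type*} [AddCommMonoid M] (f : Fin (2 * k) → M) :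
    ∑ x, f x = ∑ i, (f (dbl i) + f (dbl' i)) := by
  rw [← (finProdFinEquiv.trans (finCongr (Nat.mul_comm k 2))).sum_comp, Fintype.sum_prod_type]
  refine Finset.sum_congr rfl fun i _ => ?_
  rw [Fin.sum_univ_two]
  congr 2 <;> ext <;> simp [dbl, dbl', add_comm]

lemma dbl'_zero : dbl' (0 : Fin (k + 1)) = 1 := by
  ext; simp [dbl']

lemma dbl_succ (i : Fin k) : dbl i.succ = (dbl i).succ.succ := by
  ext; simp only [dbl, Fin.val_succ]; ring

lemma dbl'_succ (i : Fin k) : dbl' i.succ = (dbl' i).succ.succ := by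
  ext; simp only [dbl', Fin.val_succ]; ring

lemma apply_zero_of_mem_pairPartitions {σ : Perm (Fin (2 * (k + 1)))}
    (hσ : σ ∈ pairPartitions (k + 1)) : σ 0 = 0 := by
  obtain ⟨hchord, hfirst⟩ := mem_pairPartitions.mp hσ
  have hdbl : ∀ i, σ 0 ≤ σ (dbl i) := by
    intro i
    rcases eq_or_ne i 0 with rfl | hi
    · rfl
    · exact (hfirst 0 i (Fin.pos_iff_ne_zero.mpr hi)).le
  have hmin : ∀ x, σ 0 ≤ σ x := by
    intro x
    obtain ⟨i, rfl | rfl⟩ := exists_eq_dbl_or_eq_dbl' x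
    exacts [hdbl i, (hdbl i).trans (hchord i).le]
  simpa using hmin (σ.symm 0)

/-- `(Fin.cycleRange m).symm` sends `0 ↦ m` and `j + 1 ↦ m.succAbove j`, so `insertChord m τ`
pairs `0` with `m + 1` and carries the chords of `τ`, in order, to the remaining points. -/
def insertChord (m : Fin (2 * k + 1)) (τ : Perm (Fin (2 * k))) : Perm (Fin (2 * (k + 1))) :=
  liftFinSucc ((Fin.cycleRange m).symm * liftFinSucc τ)

lemma insertChord_dbl_zero (m : Fin (2 * k + 1)) (τ : Perm (Fin (2 * k))) :
    insertChord m τ (dbl 0) = 0 :=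
  liftFinSucc_apply_zero _

lemma insertChord_dbl'_zero (m : Fin (2 * k + 1)) (τ : Perm (Fin (2 * k))) :
    insertChord m τ (dbl' 0) = m.succ := by
  rw [dbl'_zero, ← Fin.succ_zero_eq_one, insertChord, liftFinSucc_apply_succ, Perm.mul_apply,
    liftFinSucc_apply_zero, Fin.cycleRange_symm_zero]

lemma insertChord_succ_succ (m : Fin (2 * k + 1)) (τ : Perm (Fin (2 * k))) (x : Fin (2 * k)) :
    insertChord m τ x.succ.succ = (m.succAbove (τ x)).succ := by
  rw [insertChord, liftFinSucc_apply_succ, Perm.mul_apply, liftFinSucc_apply_succ,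
    Fin.cycleRange_symm_succ]

lemma insertChord_dbl_succ (m : Fin (2 * k + 1)) (τ : Perm (Fin (2 * k))) (i : Fin k) :
    insertChord m τ (dbl i.succ) = (m.succAbove (τ (dbl i))).succ := by
  rw [dbl_succ, insertChord_succ_succ]

lemma insertChord_dbl'_succ (m : Fin (2 * k + 1)) (τ : Perm (Fin (2 * k))) (i : Fin k) :
    insertChord m τ (dbl' i.succ) = (m.succAbove (τ (dbl' i))).succ := by
  rw [dbl'_succ, insertChord_succ_succ]

lemma insertChord_injective :
    Function.Injective fun p : Fin (2 * k + 1) × Perm (Fin (2 * k)) => insertChord p.1 p.2 := by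
  rintro ⟨m, τ⟩ ⟨m', τ'⟩ h
  simp only at h
  have hm : m = m' := Fin.succ_injective _ <| by
    rw [← insertChord_dbl'_zero m τ, ← insertChord_dbl'_zero m' τ', h]
  subst hm
  exact Prod.ext rfl (liftFinSucc_injective (mul_left_cancel (liftFinSucc_injective h)))

lemma insertChord_mem_pairPartitions_iff (m : Fin (2 * k + 1)) (τ : Perm (Fin (2 * k))) :
    insertChord m τ ∈ pairPartitions (k + 1) ↔ τ ∈ pairPartitions k := by
  simp [mem_pairPartitions, Fin.forall_fin_succ, insertChord_dbl_zero, insertChord_dbl'_zero,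
    insertChord_dbl_succ, insertChord_dbl'_succ, Fin.succ_pos]

lemma exists_insertChord_eq {σ : Perm (Fin (2 * (k + 1)))} (hσ : σ ∈ pairPartitions (k + 1)) :
    ∃ m τ, insertChord m τ = σ := by
  obtain ⟨ρ, rfl⟩ := exists_liftFinSucc_eq_of_apply_zero (apply_zero_of_mem_pairPartitions hσ)
  obtain ⟨τ, hτ⟩ :=
    exists_liftFinSucc_eq_of_apply_zero (σ := Fin.cycleRange (ρ 0) * ρ) (Fin.cycleRange_self _)
  exact ⟨ρ 0, τ, by rw [insertChord, hτ, ← Perm.inv_def, inv_mul_cancel_left]⟩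

lemma sum_pairPartitions_succ {M : Type*} [AddCommMonoid M]
    (w : Perm (Fin (2 * (k + 1))) → M) :
    ∑ σ ∈ pairPartitions (k + 1), w σ =
      ∑ m : Fin (2 * k + 1), ∑ τ ∈ pairPartitions k, w (insertChord m τ) := by
  rw [← Finset.sum_product']
  symm
  refine Finset.sum_bij (fun p _ => insertChord p.1 p.2) (fun p hp => ?_)
    (fun p _ q _ h => insertChord_injective h) (fun σ hσ => ?_) (fun _ _ => rfl)
  · exact (insertChord_mem_pairPartitions_iff _ _).mpr (Finset.mem_product.mp hp).2
  · obtain ⟨m, τ, rfl⟩ := exists_insertChord_eq hσ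
    exact ⟨(m, τ), Finset.mem_product.mpr ⟨Finset.mem_univ _,
      (insertChord_mem_pairPartitions_iff m τ).mp hσ⟩, rfl⟩

def Crosses (σ : Perm (Fin (2 * k))) (i j : Fin k) : Prop :=
  Xor (σ (dbl i) < σ (dbl j) ∧ σ (dbl j) < σ (dbl' i))
    (σ (dbl i) < σ (dbl' j) ∧ σ (dbl' j) < σ (dbl' i))

lemma crossNum_eq_sum (σ : Perm (Fin (2 * k))) :
    crossNum σ = ∑ i, ∑ j, if i < j ∧ Crosses σ i j then 1 else 0 := by
  rw [crossNum, Nat.card_eq_fintype_card, Fintype.card_subtype, Finset.card_filter,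
    Fintype.sum_prod_type]
  rfl

def straddleCount (m : ℕ) (τ : Perm (Fin (2 * k))) : ℕ :=
  ∑ i, if Xor ((τ (dbl i) : ℕ) < m) ((τ (dbl' i) : ℕ) < m) then 1 else 0

lemma crosses_insertChord_zero_succ (m : Fin (2 * k + 1)) (τ : Perm (Fin (2 * k))) (j : Fin k) :
    Crosses (insertChord m τ) 0 j.succ ↔ Xor ((τ (dbl j) : ℕ) < m) ((τ (dbl' j) : ℕ) < m) := by
  simp only [Crosses, insertChord_dbl_zero, insertChord_dbl'_zero, insertChord_dbl_succ,
    insertChord_dbl'_succ, Fin.succ_pos, Fin.succ_lt_succ_iff, Fin.succAbove_lt_iff_castSucc_lt,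
    true_and]
  simp only [Fin.lt_def, Fin.val_castSucc]

lemma crosses_insertChord_succ_succ (m : Fin (2 * k + 1)) (τ : Perm (Fin (2 * k))) (i j : Fin k) :
    Crosses (insertChord m τ) i.succ j.succ ↔ Crosses τ i j := by
  simp [Crosses, insertChord_dbl_succ, insertChord_dbl'_succ]

lemma crossNum_insertChord (m : Fin (2 * k + 1)) (τ : Perm (Fin (2 * k))) :
    crossNum (insertChord m τ) = straddleCount m τ + crossNum τ := by
  simp only [crossNum_eq_sum, straddleCount, Fin.sum_univ_succ (n := k), Fin.succ_pos,
    true_and, crosses_insertChord_zero_succ, crosses_insertChord_succ_succ, Fin.succ_lt_succ_iff,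
    Fin.not_lt_zero, false_and, if_false, zero_add]

lemma straddleCount_mod_two {m : ℕ} (hm : m ≤ 2 * k) (τ : Perm (Fin (2 * k))) :
    straddleCount m τ % 2 = m % 2 := by
  let below : Fin (2 * k) → ℕ := fun x => if (x : ℕ) < m then 1 else 0
  have hcount : ∑ i, (below (τ (dbl i)) + below (τ (dbl' i))) = m := by
    rw [← sum_fin_two_mul (fun x => below (τ x)), Equiv.sum_comp τ below, ← Finset.card_filter,
      Fin.card_filter_val_lt, min_eq_right hm]
  conv_rhs => rw [← hcount, Finset.sum_nat_mod]
  rw [straddleCount, Finset.sum_nat_mod]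
  congr 1
  refine Finset.sum_congr rfl fun i _ => ?_
  by_cases h : (τ (dbl i) : ℕ) < m <;> by_cases h' : (τ (dbl' i) : ℕ) < m <;> simp [below, h, h']

lemma neg_one_pow_crossNum_insertChord (m : Fin (2 * k + 1)) (τ : Perm (Fin (2 * k))) :
    (-1 : ℤ) ^ crossNum (insertChord m τ) = (-1) ^ (m : ℕ) * (-1) ^ crossNum τ := by
  rw [crossNum_insertChord, pow_add, neg_one_pow_eq_pow_mod_two (straddleCount _ _),
    straddleCount_mod_two (Nat.lt_succ_iff.mp m.isLt), ← neg_one_pow_eq_pow_mod_two]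

lemma card_pairPartitions (k : ℕ) : (pairPartitions k).card = (2 * k - 1).doubleFactorial := by
  induction k with
  | zero => simp [pairPartitions]
  | succ k ih =>
    rw [Finset.card_eq_sum_ones, sum_pairPartitions_succ,
      show 2 * (k + 1) - 1 = 2 * k + 1 by omega, Nat.doubleFactorial_add_one]
    simp [ih]

lemma sum_neg_one_pow_crossNum (k : ℕ) : ∑ σ ∈ pairPartitions k, (-1 : ℤ) ^ crossNum σ = 1 := by
  induction k with
  | zero => simp [pairPartitions, crossNum]
  | succ k ih =>
    simp_rw [sum_pairPartitions_succ, neg_one_pow_crossNum_insertChord, ← Finset.mul_sum, ih,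
      mul_one]
    rw [Fin.sum_univ_eq_sum_range (fun i => (-1 : ℤ) ^ i), neg_one_geom_sum,
      if_neg (Nat.not_even_two_mul_add_one k)]

/-- The number of pair partitions of a `2k`-element set is `(2k-1)!!`; of these,
`((2k-1)!!+1)/2` have even crossing number and `((2k-1)!!-1)/2` have odd crossing
number; hence the signed sum `Σ_ξ (-1)^{N(ξ)}` equals `1`. -/
theorem pair_partition_count_and_signed_sum (k : ℕ) :
    (pairPartitions k).card = Nat.doubleFactorial (2 * k - 1) ∧
    2 * ((pairPartitions k).filter (fun σ => Even (crossNum σ))).card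
      = Nat.doubleFactorial (2 * k - 1) + 1 ∧
    2 * ((pairPartitions k).filter (fun σ => ¬ Even (crossNum σ))).card + 1
      = Nat.doubleFactorial (2 * k - 1) ∧
    (∑ σ ∈ pairPartitions k, (-1 : ℤ) ^ crossNum σ) = 1 := by
  have hsigned := sum_neg_one_pow_crossNum k
  have hparts := Finset.card_filter_add_card_filter_not (s := pairPartitions k)
    (p := fun σ => Even (crossNum σ))
  rw [sum_neg_one_pow_eq_card_sub_card] at hsigned
  rw [card_pairPartitions] at hparts
  exact ⟨card_pairPartitions k, by omega, by omega, sum_neg_one_pow_crossNum k⟩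
end

section
/- If the partition functions of two edge-binary graphical models on a graph G are related by a gauge transformation with gauge matrices G_{ab}, G_{ba} satisfying the skew-orthogonality condition Σ_π G_{ab}(π,π') G_{ba}(π,π'') = δ(π',π''), then the partition functions are equal: Σ_π Π_a f_a(π_a) = Σ_π Π_a f̃_a(π_a), where f̃_a(π_a) = Σ_{π'_a} (Π_{b∼a} G_{ab}(π_{ab}, π'_{ab})) f_a(π'_a). -/
open Finset

/-- Gauge invariance of the partition function of an edge-binary graphical model.
A finite graph is given by a vertex type `V` and an edge type `E` with endpoint map
`ends : E → Sym2 V` (no loops).  A configuration assigns `π e ∈ {0,1}` to each edge.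
Each vertex `a` carries a weight `f a` depending on the configuration of the edges
incident to `a`.  Given gauge matrices `Gm a e`, `Gm b e` on each edge `e = {a,b}`
satisfying the skew-orthogonality condition
`Σ_π Gm a e π π' * Gm b e π π'' = δ(π',π'')`,
the partition function computed with the gauged weights
`f̃ a (π_a) = Σ_{π'_a} (Π_{e ∋ a} Gm a e (π_a e) (π'_a e)) f a (π'_a)`
equals the original partition function. -/
theorem gauge_transformation_invariance
    {V E : Type*} [Fintype V] [Fintype E] [DecidableEq V] [DecidableEq E]
    (ends : E → Sym2 V)
    (hloop : ∀ e, ¬ (ends e).IsDiag)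
    (f : (a : V) → ({e : E // a ∈ ends e} → Fin 2) → ℝ)
    (Gm : V → E → Fin 2 → Fin 2 → ℝ)
    (hortho : ∀ (e : E) (a b : V), ends e = s(a, b) → a ≠ b →
      ∀ π' π'' : Fin 2,
        (∑ π : Fin 2, Gm a e π π' * Gm b e π π'') = if π' = π'' then 1 else 0) :
    (∑ π : E → Fin 2, ∏ a : V, f a (fun e => π e.1)) =
    (∑ π : E → Fin 2, ∏ a : V,
       ∑ ρ : {e : E // a ∈ ends e} → Fin 2,
         (∏ e : {e : E // a ∈ ends e}, Gm a e.1 (π e.1) (ρ e)) * f a ρ) := by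
  classical
  set A : E → V := fun e => (ends e).out.1 with hA
  set B : E → V := fun e => (ends e).out.2 with hB
  have hends : ∀ e, ends e = s(A e, B e) := fun e => ((ends e).out_eq).symm
  have hne : ∀ e, A e ≠ B e := by
    intro e h
    exact hloop e (by rw [hends e]; exact Sym2.mk_isDiag_iff.mpr h)
  have hAmem : ∀ e, A e ∈ ends e := fun e => (ends e).out_fst_mem
  have hBmem : ∀ e, B e ∈ ends e := fun e => (ends e).out_snd_mem
  have cast_lem : ∀ (σ : (a : V) → {e : E // a ∈ ends e} → Fin 2) (a a' : V),
      a = a' → ∀ (e : E) (h1 : a ∈ ends e) (h2 : a' ∈ ends e),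
      σ a ⟨e, h1⟩ = σ a' ⟨e, h2⟩ := by
    rintro σ a _ rfl e h1 h2; rfl
  -- expand the product of sums on the RHS
  simp_rw [Fintype.prod_sum]
  rw [Finset.sum_comm]
  -- key computation: sum over π of product of G's
  have key : ∀ ρ : (a : V) → {e : E // a ∈ ends e} → Fin 2,
      (∑ π : E → Fin 2, ∏ a : V,
        ∏ e : {e : E // a ∈ ends e}, Gm a e.1 (π e.1) (ρ a e))
      = if (∀ e : E, ρ (A e) ⟨e, hAmem e⟩ = ρ (B e) ⟨e, hBmem e⟩) then 1 else 0 := by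
    intro ρ
    -- extend ρ to a total function
    set ρ' : V → E → Fin 2 := fun a e => if h : a ∈ ends e then ρ a ⟨e, h⟩ else 0 with hρ'
    have hsub : ∀ (π : E → Fin 2) (a : V),
        (∏ e : {e : E // a ∈ ends e}, Gm a e.1 (π e.1) (ρ a e))
        = ∏ e ∈ univ.filter (fun e => a ∈ ends e), Gm a e (π e) (ρ' a e) := by
      intro π a
      rw [Finset.prod_subtype (univ.filter (fun e => a ∈ ends e))
        (p := fun e => a ∈ ends e) (by simp) (fun e => Gm a e (π e) (ρ' a e))]
      refine Finset.prod_congr rfl fun e _ => ?_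
      simp only [hρ']
      rw [dif_pos e.2]
    have hswap : ∀ π : E → Fin 2,
        (∏ a : V, ∏ e ∈ univ.filter (fun e => a ∈ ends e), Gm a e (π e) (ρ' a e))
        = ∏ e : E, ∏ a ∈ univ.filter (fun a => a ∈ ends e), Gm a e (π e) (ρ' a e) := by
      intro π
      exact Finset.prod_comm' (fun a e => by simp)
    have hfilter : ∀ e : E, univ.filter (fun a => a ∈ ends e) = {A e, B e} := by
      intro e
      ext a
      simp [hends e, Sym2.mem_iff]
    calc (∑ π : E → Fin 2, ∏ a : V,
            ∏ e : {e : E // a ∈ ends e}, Gm a e.1 (π e.1) (ρ a e))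
        = ∑ π : E → Fin 2, ∏ e : E,
            (Gm (A e) e (π e) (ρ' (A e) e) * Gm (B e) e (π e) (ρ' (B e) e)) := by
          refine Finset.sum_congr rfl fun π _ => ?_
          simp_rw [hsub π]
          rw [hswap π]
          refine Finset.prod_congr rfl fun e _ => ?_
          rw [hfilter e, Finset.prod_pair (hne e)]
      _ = ∏ e : E, ∑ x : Fin 2,
            (Gm (A e) e x (ρ' (A e) e) * Gm (B e) e x (ρ' (B e) e)) := by
          rw [Fintype.prod_sum]
      _ = ∏ e : E, if ρ' (A e) e = ρ' (B e) e then (1:ℝ) else 0 := by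
          refine Finset.prod_congr rfl fun e _ => ?_
          exact hortho e (A e) (B e) (hends e) (hne e) _ _
      _ = if (∀ e : E, ρ (A e) ⟨e, hAmem e⟩ = ρ (B e) ⟨e, hBmem e⟩) then 1 else 0 := by
          rw [Fintype.prod_boole]
          congr 1
          simp only [eq_iff_iff]
          constructor <;> intro h e <;> have := h e <;>
            simpa [hρ', hAmem e, hBmem e] using this
  -- now simplify both sides
  simp_rw [Finset.prod_mul_distrib, ← Finset.sum_mul, key, ite_mul, one_mul, zero_mul]
  rw [← Finset.sum_filter]
  refine (Finset.sum_nbij' (i := fun (ρ : (a : V) → {e : E // a ∈ ends e} → Fin 2) (e : E) => ρ (A e) ⟨e, hAmem e⟩)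
    (j := fun (π : E → Fin 2) (a : V) (e : {e : E // a ∈ ends e}) => π e.1)
    ?_ ?_ ?_ ?_ ?_).symm
  · intro ρ hρ
    exact Finset.mem_univ _
  · intro π _
    simp
  · intro ρ hρ
    simp only [Finset.mem_filter] at hρ
    funext a e
    obtain ⟨e, he⟩ := e
    rcases Sym2.mem_iff.mp ((hends e) ▸ he) with h | h
    · exact cast_lem ρ _ _ h.symm e (hAmem e) he
    · exact (hρ.2 e).trans (cast_lem ρ _ _ h.symm e (hBmem e) he)
  · intro π _
    rfl
  · intro ρ hρ
    simp only [Finset.mem_filter] at hρ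
    refine Finset.prod_congr rfl fun a _ => ?_
    congr 1
    funext e
    obtain ⟨e, he⟩ := e
    rcases Sym2.mem_iff.mp ((hends e) ▸ he) with h | h
    · exact cast_lem ρ _ _ h e he (hAmem e)
    · exact (cast_lem ρ _ _ h e he (hBmem e)).trans (hρ.2 e).symm
end

section
/- In the expansion of the Gaussian Grassmann expectation ⟨exp(½ Σ_{(b→a→c)} φ_{ab} ς^{(a)}_{bc} W^{(a)}_{bc} φ_{ac})⟩ with pair correlations ⟨φ_{ab} φ_{ba}⟩ = σ_{ab} and ⟨φ_{ab} φ_{cd}⟩ = 0 otherwise, a monomial labeled by local pair partitions ξ_a gives a nonzero contribution only if the selected edge-pairs are consistent across edges, i.e., edge {a,b} appears in the local partition at a iff it appears in the local partition at b; when consistent, the set of selected edges forms a Z₂-cycle γ. -/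
open Finset

/-- The Pfaffian of a `2k × 2k` matrix: the signed sum over partitions of the index
set into pairs (the Wick/Gaussian pairing expectation of a monomial in `2k`
Grassmann variables with the given covariances). -/
def pf (k : ℕ) (H : Matrix (Fin (2 * k)) (Fin (2 * k)) ℝ) : ℝ :=
  ∑ σ ∈ Finset.univ.filter (fun σ : Equiv.Perm (Fin (2 * k)) =>
      (∀ i : Fin k, σ (dbl i) < σ (dbl' i)) ∧
      ∀ i j : Fin k, i < j → σ (dbl i) < σ (dbl j)),
    (Equiv.Perm.sign σ : ℤ) • ∏ i : Fin k, H (σ (dbl i)) (σ (dbl' i))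

/-- Consistency of local pairings in the Wick expansion of the G³ model.
A monomial in the expansion is labeled by local pair partitions `ξ_a` of the darts
out of each vertex, i.e. by a set `M` of darts in which every vertex has an even
number of outgoing darts.  Its Gaussian Grassmann expectation is the pairing (Wick)
sum with covariances `⟨φ_{ab} φ_{ba}⟩ = σ_{ab}` and `⟨φ_{ab} φ_{cd}⟩ = 0` otherwise,
i.e. a Pfaffian of the covariance matrix restricted to `M`.  This expectation is
nonzero only if the selection is consistent across edges — the edge `{a,b}` is
selected at `a` iff it is selected at `b`, i.e. `M` is closed under dart reversal —
and when it is consistent, the set `γ` of selected edges forms a `Z₂`-cycle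
(every vertex has even degree in `γ`). -/
theorem wick_monomial_consistency
    {V : Type*} [Fintype V] [DecidableEq V] (G : SimpleGraph V) [DecidableRel G.Adj]
    (σ : V → V → ℝ)
    (M : Finset G.Dart) (k : ℕ) (eM : {d : G.Dart // d ∈ M} ≃ Fin (2 * k))
    (hpair : ∀ a : V, Even ((M.filter (fun d => d.toProd.1 = a)).card)) :
    (pf k (fun i j =>
        if ((eM.symm j : {d : G.Dart // d ∈ M}) : G.Dart) =
            ((eM.symm i : {d : G.Dart // d ∈ M}) : G.Dart).symm
        then σ ((eM.symm i : {d : G.Dart // d ∈ M}) : G.Dart).toProd.1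
               ((eM.symm i : {d : G.Dart // d ∈ M}) : G.Dart).toProd.2
        else 0) ≠ 0 →
      ∀ d ∈ M, d.symm ∈ M) ∧
    ((∀ d ∈ M, d.symm ∈ M) →
      ∀ a : V,
        Even (((M.image (fun d => d.edge)).filter (fun e => a ∈ e)).card)) := by
  constructor
  · -- Part 1
    intro hpf d hd
    obtain ⟨π, hπmem, hπne⟩ := Finset.exists_ne_zero_of_sum_ne_zero hpf
    have hprod : ∀ i : Fin k,
        (if ((eM.symm (π (dbl' i)) : {d : G.Dart // d ∈ M}) : G.Dart) =
            ((eM.symm (π (dbl i)) : {d : G.Dart // d ∈ M}) : G.Dart).symm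
        then σ ((eM.symm (π (dbl i)) : {d : G.Dart // d ∈ M}) : G.Dart).toProd.1
               ((eM.symm (π (dbl i)) : {d : G.Dart // d ∈ M}) : G.Dart).toProd.2
        else 0) ≠ 0 := by
      intro i
      have h0 : (∏ i : Fin k, (if ((eM.symm (π (dbl' i)) : {d : G.Dart // d ∈ M}) : G.Dart) =
            ((eM.symm (π (dbl i)) : {d : G.Dart // d ∈ M}) : G.Dart).symm
        then σ ((eM.symm (π (dbl i)) : {d : G.Dart // d ∈ M}) : G.Dart).toProd.1
               ((eM.symm (π (dbl i)) : {d : G.Dart // d ∈ M}) : G.Dart).toProd.2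
        else 0)) ≠ 0 := by
        intro h0
        rw [h0, smul_zero] at hπne
        exact hπne rfl
      rw [Finset.prod_ne_zero_iff] at h0
      exact h0 i (Finset.mem_univ i)
    obtain ⟨m, hm⟩ := π.surjective (eM ⟨d, hd⟩)
    rcases Nat.even_or_odd m.1 with he | ho
    · obtain ⟨t, ht⟩ := he
      have htk : t < k := by have := m.isLt; omega
      have hmeq : m = dbl (⟨t, htk⟩ : Fin k) := by
        apply Fin.ext
        show m.1 = 2 * t
        omega
      have hfac := hprod ⟨t, htk⟩
      rw [← hmeq, hm] at hfac
      by_cases hc : ((eM.symm (π (dbl' ⟨t, htk⟩)) : {d : G.Dart // d ∈ M}) : G.Dart) =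
          ((eM.symm (eM ⟨d, hd⟩) : {d : G.Dart // d ∈ M}) : G.Dart).symm
      · rw [Equiv.symm_apply_apply] at hc
        have hmem := (eM.symm (π (dbl' ⟨t, htk⟩))).2
        rw [hc] at hmem
        exact hmem
      · rw [if_neg hc] at hfac
        exact absurd rfl hfac
    · obtain ⟨t, ht⟩ := ho
      have htk : t < k := by have := m.isLt; omega
      have hmeq : m = dbl' (⟨t, htk⟩ : Fin k) := by
        apply Fin.ext
        show m.1 = 2 * t + 1
        omega
      have hfac := hprod ⟨t, htk⟩
      rw [← hmeq, hm] at hfac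
      by_cases hc : ((eM.symm (eM ⟨d, hd⟩) : {d : G.Dart // d ∈ M}) : G.Dart) =
          ((eM.symm (π (dbl ⟨t, htk⟩)) : {d : G.Dart // d ∈ M}) : G.Dart).symm
      · have hcd : d = ((eM.symm (π (dbl ⟨t, htk⟩)) : {d : G.Dart // d ∈ M}) : G.Dart).symm := by
          rw [← hc, Equiv.symm_apply_apply]
        have : d.symm = ((eM.symm (π (dbl ⟨t, htk⟩)) : {d : G.Dart // d ∈ M}) : G.Dart) := by
          rw [hcd, SimpleGraph.Dart.symm_symm]
        rw [this]
        exact (eM.symm (π (dbl ⟨t, htk⟩))).2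
      · rw [if_neg hc] at hfac
        exact absurd rfl hfac
  · -- Part 2
    intro hM a
    have hcard : (M.filter (fun d => d.toProd.1 = a)).card =
        ((M.image (fun d => d.edge)).filter (fun e => a ∈ e)).card := by
      apply Finset.card_bij (fun d _ => d.edge)
      · intro d hd
        rw [Finset.mem_filter] at hd ⊢
        refine ⟨Finset.mem_image_of_mem _ hd.1, ?_⟩
        rw [SimpleGraph.Dart.edge, ← hd.2]
        exact Sym2.mem_mk_left _ _
      · intro d1 h1 d2 h2 heq
        rw [Finset.mem_filter] at h1 h2
        rcases (SimpleGraph.dart_edge_eq_iff d1 d2).mp heq with h | h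
        · exact h
        · exfalso
          have h2a : d2.toProd.2 = a := by rw [← h1.2, h]; rfl
          exact d2.adj.ne (h2.2.trans h2a.symm)
      · intro e he
        rw [Finset.mem_filter, Finset.mem_image] at he
        obtain ⟨⟨d, hdM, hde⟩, hae⟩ := he
        rw [← hde, SimpleGraph.Dart.edge, Sym2.mem_iff] at hae
        rcases hae with h | h
        · exact ⟨d, Finset.mem_filter.mpr ⟨hdM, h.symm⟩, hde⟩
        · refine ⟨d.symm, Finset.mem_filter.mpr ⟨hM d hdM, h.symm⟩, ?_⟩
          rw [SimpleGraph.Dart.edge_symm, hde]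
    rw [← hcard]
    exact hpair a
end

section
/- Concatenation formula for self-intersections of planar closed curves: if C₁ and C₂ are closed curves in general position sharing a basepoint, then the self-intersection count of the concatenation satisfies i(C₁ ⋆ C₂) = i(C₁) + i(C₂) + C₁·C₂ + 1 (mod 2), where C₁·C₂ is the mod-2 count of intersections of C₁ with C₂ away from the basepoint. -/
/-- The planar cross product (determinant) of two vectors in `ℝ²`. -/
def det2 (u v : ℝ × ℝ) : ℝ := u.1 * v.2 - u.2 * v.1

/-- The closed segments `[a,b]` and `[p,q]` cross transversally at an interior
point of both. -/
def ProperCross (a b p q : ℝ × ℝ) : Prop :=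
  det2 (b - a) (p - a) * det2 (b - a) (q - a) < 0 ∧
  det2 (q - p) (a - p) * det2 (q - p) (b - p) < 0

/-- The number of transversal self-crossings of the closed polygonal curve with
vertex sequence `c` (of period `n`): unordered pairs of segments crossing properly. -/
noncomputable def selfCross (c : ℕ → ℝ × ℝ) (n : ℕ) : ℕ :=
  Nat.card {p : ℕ × ℕ // p.1 < p.2 ∧ p.2 < n ∧
    ProperCross (c p.1) (c (p.1 + 1)) (c p.2) (c (p.2 + 1))}

/-- The number of repeated vertices (vertex double points) of the closed curve. -/
noncomputable def vtxDouble (c : ℕ → ℝ × ℝ) (n : ℕ) : ℕ :=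
  Nat.card {p : ℕ × ℕ // p.1 < p.2 ∧ p.2 < n ∧ c p.1 = c p.2}

/-- The total number of double points `i(C)` of a closed polygonal curve in general
position: transversal segment crossings plus repeated vertices. -/
noncomputable def selfInt (c : ℕ → ℝ × ℝ) (n : ℕ) : ℕ := selfCross c n + vtxDouble c n

/-- The number of transversal intersections `C₁ · C₂` of two closed curves. -/
noncomputable def mutCross (c₁ : ℕ → ℝ × ℝ) (n₁ : ℕ) (c₂ : ℕ → ℝ × ℝ) (n₂ : ℕ) : ℕ :=
  Nat.card {p : ℕ × ℕ // p.1 < n₁ ∧ p.2 < n₂ ∧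
    ProperCross (c₁ p.1) (c₁ (p.1 + 1)) (c₂ p.2) (c₂ (p.2 + 1))}

/-- The concatenation `C₁ ⋆ C₂` of two closed curves sharing a basepoint: traverse
`C₂` first, then `C₁`. -/
def concatC (c₁ c₂ : ℕ → ℝ × ℝ) (n₁ n₂ : ℕ) : ℕ → ℝ × ℝ :=
  fun k => if k % (n₁ + n₂) < n₂ then c₂ (k % (n₁ + n₂))
           else c₁ (k % (n₁ + n₂) - n₂)

lemma properCross_symm {a b p q : ℝ × ℝ} (h : ProperCross a b p q) : ProperCross p q a b :=
  ⟨h.2, h.1⟩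

lemma finite_aux {Q : ℕ × ℕ → Prop} {n : ℕ} (h : ∀ p, Q p → p.1 < n ∧ p.2 < n) :
    Finite {p : ℕ × ℕ // Q p} := by
  have : {p : ℕ × ℕ | Q p}.Finite :=
    ((Set.finite_Iio n).prod (Set.finite_Iio n)).subset (fun p hp => h p hp)
  exact this.to_subtype

lemma selfCross_split (n₁ n₂ : ℕ) (c₁ c₂ C : ℕ → ℝ × ℝ)
    (hseg₂ : ∀ k < n₂, C k = c₂ k ∧ C (k + 1) = c₂ (k + 1))
    (hseg₁ : ∀ k, n₂ ≤ k → k < n₁ + n₂ → C k = c₁ (k - n₂) ∧ C (k + 1) = c₁ (k - n₂ + 1)) :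
    selfCross C (n₁ + n₂) = selfCross c₂ n₂ + (mutCross c₁ n₁ c₂ n₂ + selfCross c₁ n₁) := by
  classical
  haveI finS : Finite {p : ℕ × ℕ // p.1 < p.2 ∧ p.2 < n₁ + n₂ ∧
      ProperCross (C p.1) (C (p.1 + 1)) (C p.2) (C (p.2 + 1))} :=
    finite_aux (fun p hp => ⟨hp.1.trans hp.2.1, hp.2.1⟩)
  haveI finT₂ : Finite {p : ℕ × ℕ // p.1 < p.2 ∧ p.2 < n₂ ∧
      ProperCross (c₂ p.1) (c₂ (p.1 + 1)) (c₂ p.2) (c₂ (p.2 + 1))} :=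
    finite_aux (fun p hp => ⟨hp.1.trans hp.2.1, hp.2.1⟩)
  haveI finT₁ : Finite {p : ℕ × ℕ // p.1 < p.2 ∧ p.2 < n₁ ∧
      ProperCross (c₁ p.1) (c₁ (p.1 + 1)) (c₁ p.2) (c₁ (p.2 + 1))} :=
    finite_aux (fun p hp => ⟨hp.1.trans hp.2.1, hp.2.1⟩)
  haveI finM : Finite {p : ℕ × ℕ // p.1 < n₁ ∧ p.2 < n₂ ∧
      ProperCross (c₁ p.1) (c₁ (p.1 + 1)) (c₂ p.2) (c₂ (p.2 + 1))} :=
    finite_aux (n := n₁ + n₂) (fun p hp => ⟨by omega, by omega⟩)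
  have eA : {x : {p : ℕ × ℕ // p.1 < p.2 ∧ p.2 < n₁ + n₂ ∧
        ProperCross (C p.1) (C (p.1 + 1)) (C p.2) (C (p.2 + 1))} // x.1.2 < n₂} ≃
      {p : ℕ × ℕ // p.1 < p.2 ∧ p.2 < n₂ ∧
        ProperCross (c₂ p.1) (c₂ (p.1 + 1)) (c₂ p.2) (c₂ (p.2 + 1))} :=
    { toFun := fun x => ⟨x.1.1, x.1.2.1, x.2, by
        obtain ⟨⟨⟨a, b⟩, hab, hb, hpc⟩, h⟩ := x
        rw [(hseg₂ a (hab.trans h)).1, (hseg₂ a (hab.trans h)).2,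
            (hseg₂ b h).1, (hseg₂ b h).2] at hpc
        exact hpc⟩
      invFun := fun p => ⟨⟨p.1, p.2.1, by omega, by
        obtain ⟨⟨a, b⟩, hab, hb, hpc⟩ := p
        rw [(hseg₂ a (hab.trans hb)).1, (hseg₂ a (hab.trans hb)).2,
            (hseg₂ b hb).1, (hseg₂ b hb).2]
        exact hpc⟩, p.2.2.1⟩
      left_inv := fun x => Subtype.ext (Subtype.ext rfl)
      right_inv := fun p => rfl }
  have eB : {x : {x : {p : ℕ × ℕ // p.1 < p.2 ∧ p.2 < n₁ + n₂ ∧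
        ProperCross (C p.1) (C (p.1 + 1)) (C p.2) (C (p.2 + 1))} // ¬ x.1.2 < n₂} //
        x.1.1.1 < n₂} ≃
      {p : ℕ × ℕ // p.1 < n₁ ∧ p.2 < n₂ ∧
        ProperCross (c₁ p.1) (c₁ (p.1 + 1)) (c₂ p.2) (c₂ (p.2 + 1))} :=
    { toFun := fun y => ⟨(y.1.1.1.2 - n₂, y.1.1.1.1), by
        obtain ⟨⟨⟨⟨a, b⟩, hab, hb, hpc⟩, hb2⟩, ha⟩ := y
        simp only [not_lt] at hb2
        dsimp only at *
        refine ⟨by omega, ha, ?_⟩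
        rw [(hseg₂ a ha).1, (hseg₂ a ha).2, (hseg₁ b hb2 hb).1, (hseg₁ b hb2 hb).2] at hpc
        exact properCross_symm hpc⟩
      invFun := fun p => ⟨⟨⟨(p.1.2, p.1.1 + n₂), by
        obtain ⟨⟨i, j⟩, hi, hj, hpc⟩ := p
        dsimp only at *
        refine ⟨by omega, by omega, ?_⟩
        rw [(hseg₂ j hj).1, (hseg₂ j hj).2,
            (hseg₁ (i + n₂) (Nat.le_add_left _ _) (by omega)).1,
            (hseg₁ (i + n₂) (Nat.le_add_left _ _) (by omega)).2, Nat.add_sub_cancel]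
        exact properCross_symm hpc⟩, by
        simp only [not_lt]
        exact Nat.le_add_left _ _⟩, p.2.2.1⟩
      left_inv := fun y => by
        obtain ⟨⟨⟨⟨a, b⟩, hP⟩, hb2⟩, ha⟩ := y
        simp only [not_lt] at hb2
        have hb2' : n₂ ≤ b := hb2
        refine Subtype.ext (Subtype.ext (Subtype.ext ?_))
        show (a, b - n₂ + n₂) = (a, b)
        rw [Nat.sub_add_cancel hb2']
      right_inv := fun p => by
        obtain ⟨⟨i, j⟩, h⟩ := p
        apply Subtype.ext
        show (i + n₂ - n₂, j) = (i, j)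
        rw [Nat.add_sub_cancel] }
  have eC : {x : {x : {p : ℕ × ℕ // p.1 < p.2 ∧ p.2 < n₁ + n₂ ∧
        ProperCross (C p.1) (C (p.1 + 1)) (C p.2) (C (p.2 + 1))} // ¬ x.1.2 < n₂} //
        ¬ x.1.1.1 < n₂} ≃
      {p : ℕ × ℕ // p.1 < p.2 ∧ p.2 < n₁ ∧
        ProperCross (c₁ p.1) (c₁ (p.1 + 1)) (c₁ p.2) (c₁ (p.2 + 1))} :=
    { toFun := fun y => ⟨(y.1.1.1.1 - n₂, y.1.1.1.2 - n₂), by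
        obtain ⟨⟨⟨⟨a, b⟩, hab, hb, hpc⟩, hb2⟩, ha⟩ := y
        simp only [not_lt] at hb2 ha
        dsimp only at *
        refine ⟨by omega, by omega, ?_⟩
        rw [(hseg₁ a ha (by omega)).1, (hseg₁ a ha (by omega)).2,
            (hseg₁ b hb2 hb).1, (hseg₁ b hb2 hb).2] at hpc
        exact hpc⟩
      invFun := fun p => ⟨⟨⟨(p.1.1 + n₂, p.1.2 + n₂), by
        obtain ⟨⟨i, j⟩, hij, hj, hpc⟩ := p
        dsimp only at *
        refine ⟨by omega, by omega, ?_⟩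
        rw [(hseg₁ (i + n₂) (Nat.le_add_left _ _) (by omega)).1,
            (hseg₁ (i + n₂) (Nat.le_add_left _ _) (by omega)).2,
            (hseg₁ (j + n₂) (Nat.le_add_left _ _) (by omega)).1,
            (hseg₁ (j + n₂) (Nat.le_add_left _ _) (by omega)).2, Nat.add_sub_cancel,
            Nat.add_sub_cancel]
        exact hpc⟩, by
        simp only [not_lt]
        exact Nat.le_add_left _ _⟩, by
        simp only [not_lt]
        exact Nat.le_add_left _ _⟩
      left_inv := fun y => by
        obtain ⟨⟨⟨⟨a, b⟩, hP⟩, hb2⟩, ha⟩ := y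
        simp only [not_lt] at hb2 ha
        have hb2' : n₂ ≤ b := hb2
        have ha' : n₂ ≤ a := ha
        refine Subtype.ext (Subtype.ext (Subtype.ext ?_))
        show (a - n₂ + n₂, b - n₂ + n₂) = (a, b)
        rw [Nat.sub_add_cancel hb2', Nat.sub_add_cancel ha']
      right_inv := fun p => by
        obtain ⟨⟨i, j⟩, h⟩ := p
        apply Subtype.ext
        show (i + n₂ - n₂, j + n₂ - n₂) = (i, j)
        rw [Nat.add_sub_cancel]
        rw [Nat.add_sub_cancel] }
  have E := (Equiv.sumCompl (fun x : {p : ℕ × ℕ // p.1 < p.2 ∧ p.2 < n₁ + n₂ ∧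
        ProperCross (C p.1) (C (p.1 + 1)) (C p.2) (C (p.2 + 1))} => x.1.2 < n₂)).symm.trans
      (Equiv.sumCongr eA
        ((Equiv.sumCompl (fun x => x.1.1.1 < n₂)).symm.trans (Equiv.sumCongr eB eC)))
  unfold selfCross mutCross
  rw [Nat.card_congr E, Nat.card_sum, Nat.card_sum]

/-- Concatenation formula for self-intersections of planar closed curves: if `C₁` and
`C₂` are closed curves in general position sharing a basepoint (their only common
vertex, each without repeated vertices of its own), then
`i(C₁ ⋆ C₂) ≡ i(C₁) + i(C₂) + C₁·C₂ + 1 (mod 2)`,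
where `C₁·C₂` counts the intersections of `C₁` with `C₂` away from the basepoint and
the basepoint becomes one additional double point of the concatenated curve. -/
theorem selfInt_concat
    (n₁ n₂ : ℕ) (h₁ : 0 < n₁) (h₂ : 0 < n₂)
    (c₁ c₂ : ℕ → ℝ × ℝ)
    (hper₁ : ∀ k, c₁ (k + n₁) = c₁ k) (hper₂ : ∀ k, c₂ (k + n₂) = c₂ k)
    (hbase : c₁ 0 = c₂ 0)
    (hinj₁ : ∀ i j, i < j → j < n₁ → c₁ i ≠ c₁ j)
    (hinj₂ : ∀ i j, i < j → j < n₂ → c₂ i ≠ c₂ j)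
    (hmeet : ∀ i < n₁, ∀ j < n₂, c₁ i = c₂ j → (i = 0 ∧ j = 0)) :
    selfInt (concatC c₁ c₂ n₁ n₂) (n₁ + n₂) ≡
      selfInt c₁ n₁ + selfInt c₂ n₂ + mutCross c₁ n₁ c₂ n₂ + 1 [MOD 2] := by
  classical
  have e2 : c₂ n₂ = c₂ 0 := by simpa using hper₂ 0
  have e1 : c₁ n₁ = c₁ 0 := by simpa using hper₁ 0
  have hmod : ∀ k < n₁ + n₂,
      concatC c₁ c₂ n₁ n₂ k = if k < n₂ then c₂ k else c₁ (k - n₂) := by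
    intro k hk
    simp [concatC, Nat.mod_eq_of_lt hk]
  have hseg₂ : ∀ k < n₂, concatC c₁ c₂ n₁ n₂ k = c₂ k ∧
      concatC c₁ c₂ n₁ n₂ (k + 1) = c₂ (k + 1) := by
    intro k hk
    refine ⟨by rw [hmod k (by omega), if_pos hk], ?_⟩
    rcases lt_or_eq_of_le (Nat.succ_le_of_lt hk) with h | h
    · rw [hmod (k + 1) (by omega), if_pos h]
    · calc concatC c₁ c₂ n₁ n₂ (k + 1) = c₁ (k + 1 - n₂) := by
            rw [hmod (k + 1) (by omega), if_neg (by omega)]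
        _ = c₁ 0 := by rw [show k + 1 - n₂ = 0 by omega]
        _ = c₂ 0 := hbase
        _ = c₂ n₂ := e2.symm
        _ = c₂ (k + 1) := by rw [← h]
  have hseg₁ : ∀ k, n₂ ≤ k → k < n₁ + n₂ → concatC c₁ c₂ n₁ n₂ k = c₁ (k - n₂) ∧
      concatC c₁ c₂ n₁ n₂ (k + 1) = c₁ (k - n₂ + 1) := by
    intro k hk1 hk2
    refine ⟨by rw [hmod k hk2, if_neg (by omega)], ?_⟩
    rcases lt_or_eq_of_le (Nat.succ_le_of_lt hk2) with h | h
    · rw [hmod (k + 1) h, if_neg (by omega), show k + 1 - n₂ = k - n₂ + 1 by omega]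
    · have hc : concatC c₁ c₂ n₁ n₂ (k + 1) = c₂ 0 := by
        have h' : k + 1 = n₁ + n₂ := h
        simp only [concatC]
        rw [h', Nat.mod_self, if_pos h₂]
      rw [hc, ← hbase, show k - n₂ + 1 = n₁ by omega, e1]
  have hvC : vtxDouble (concatC c₁ c₂ n₁ n₂) (n₁ + n₂) = 1 := by
    have huniq : ∀ a b : ℕ, a < b → b < n₁ + n₂ →
        concatC c₁ c₂ n₁ n₂ a = concatC c₁ c₂ n₁ n₂ b → a = 0 ∧ b = n₂ := by
      intro a b hab hb heq
      rw [hmod a (by omega), hmod b hb] at heq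
      by_cases hb1 : b < n₂
      · rw [if_pos (by omega), if_pos hb1] at heq
        exact absurd heq (hinj₂ a b hab hb1)
      · rw [if_neg hb1] at heq
        by_cases ha1 : a < n₂
        · rw [if_pos ha1] at heq
          have := hmeet (b - n₂) (by omega) a ha1 heq.symm
          omega
        · rw [if_neg ha1] at heq
          exact absurd heq (hinj₁ (a - n₂) (b - n₂) (by omega) (by omega))
    unfold vtxDouble
    rw [Nat.card_eq_one_iff_unique]
    constructor
    · constructor
      intro x y
      apply Subtype.ext
      obtain ⟨⟨a, b⟩, h1, h2, h3⟩ := x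
      obtain ⟨⟨a', b'⟩, h1', h2', h3'⟩ := y
      have u1 := huniq a b h1 h2 h3
      have u2 := huniq a' b' h1' h2' h3'
      show (a, b) = (a', b')
      simp only [Prod.mk.injEq]
      omega
    · refine ⟨⟨(0, n₂), h₂, by omega, ?_⟩⟩
      show concatC c₁ c₂ n₁ n₂ 0 = concatC c₁ c₂ n₁ n₂ n₂
      rw [hmod 0 (by omega), hmod n₂ (by omega), if_pos h₂, if_neg (lt_irrefl n₂),
        Nat.sub_self]
      exact hbase.symm
  have hv₁ : vtxDouble c₁ n₁ = 0 := by
    unfold vtxDouble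
    haveI : IsEmpty {p : ℕ × ℕ // p.1 < p.2 ∧ p.2 < n₁ ∧ c₁ p.1 = c₁ p.2} :=
      ⟨fun x => hinj₁ x.1.1 x.1.2 x.2.1 x.2.2.1 x.2.2.2⟩
    exact Nat.card_of_isEmpty
  have hv₂ : vtxDouble c₂ n₂ = 0 := by
    unfold vtxDouble
    haveI : IsEmpty {p : ℕ × ℕ // p.1 < p.2 ∧ p.2 < n₂ ∧ c₂ p.1 = c₂ p.2} :=
      ⟨fun x => hinj₂ x.1.1 x.1.2 x.2.1 x.2.2.1 x.2.2.2⟩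
    exact Nat.card_of_isEmpty
  have hsc := selfCross_split n₁ n₂ c₁ c₂ (concatC c₁ c₂ n₁ n₂) hseg₂ hseg₁
  unfold selfInt
  rw [hsc, hvC, hv₁, hv₂]
  unfold Nat.ModEq
  omega
end
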